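/- Let n = 2k+1 with k ≥ 1 be an odd integer. Let Λ, a₀, …, aₙ : ℝ² → ℝ be smooth with Λ > 0 everywhere, c₂ ∈ ℝ a constant, and suppose the Kolokoltsov relations hold with c₁ = 0: a_{n-1} = Σ_{j=1}^{k} (−1)^{j+1} a_{n-1-2j} and a_n = c₂ + Σ_{j=1}^{k} (−1)^{j+1} a_{n-2j}. Suppose {H, F} ≡ 0 on ℝ² × ℝ², where H = (p₁² + p₂²)/(2Λ) and F = Σ_{i=0}^{n} a_i p₁^{n-i} p₂^{i}. Define P = (Σ_{j=1}^{k} (−1)^{j+1} (n+1−2j) a_{2j-1}) Λ, Q = (Σ_{j=0}^{k-1} (−1)^j (n−1−2j) a_{2j}) Λ, and R = (−Σ_{j=1}^{k} (−1)^{j+1} (n+1−2j) a_{2j-1} + (−1)^k n c₂) Λ. Then P_x + Q_y = 0 and Q_x + R_y = 0 identically on ℝ². -/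

import Mathlib

open Real Finset Polynomial

/-- Partial derivative with respect to the first variable. -/
noncomputable def pdx (f : ℝ × ℝ → ℝ) : ℝ × ℝ → ℝ :=
  fun p => deriv (fun s => f (s, p.2)) p.1

/-- Partial derivative with respect to the second variable. -/
noncomputable def pdy (f : ℝ × ℝ → ℝ) : ℝ × ℝ → ℝ :=
  fun p => deriv (fun s => f (p.1, s)) p.2

/-- Partial derivative of a function on phase space `T*ℝ²` w.r.t. `x`. -/
noncomputable def pq1 (G : (ℝ × ℝ) × ℝ × ℝ → ℝ) : (ℝ × ℝ) × ℝ × ℝ → ℝ :=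
  fun z => deriv (fun s => G ((s, z.1.2), z.2)) z.1.1

/-- Partial derivative of a function on phase space `T*ℝ²` w.r.t. `y`. -/
noncomputable def pq2 (G : (ℝ × ℝ) × ℝ × ℝ → ℝ) : (ℝ × ℝ) × ℝ × ℝ → ℝ :=
  fun z => deriv (fun s => G ((z.1.1, s), z.2)) z.1.2

/-- Partial derivative of a function on phase space `T*ℝ²` w.r.t. `p₁`. -/
noncomputable def pp1 (G : (ℝ × ℝ) × ℝ × ℝ → ℝ) : (ℝ × ℝ) × ℝ × ℝ → ℝ :=
  fun z => deriv (fun s => G (z.1, (s, z.2.2))) z.2.1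

/-- Partial derivative of a function on phase space `T*ℝ²` w.r.t. `p₂`. -/
noncomputable def pp2 (G : (ℝ × ℝ) × ℝ × ℝ → ℝ) : (ℝ × ℝ) × ℝ × ℝ → ℝ :=
  fun z => deriv (fun s => G (z.1, (z.2.1, s))) z.2.2

/-- The Poisson bracket `{G, K}` on `T*ℝ²`. -/
noncomputable def poisson (G K : (ℝ × ℝ) × ℝ × ℝ → ℝ) : (ℝ × ℝ) × ℝ × ℝ → ℝ :=
  fun z => pq1 K z * pp1 G z - pp1 K z * pq1 G z + pq2 K z * pp2 G z - pp2 K z * pq2 G z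

lemma sliceX_hasDerivAt {f : ℝ × ℝ → ℝ} (hf : ContDiff ℝ (⊤ : ℕ∞) f) (x y : ℝ) :
    HasDerivAt (fun s => f (s, y)) (pdx f (x, y)) x := by
  have h : DifferentiableAt ℝ (fun s : ℝ => f (s, y)) x :=
    ((hf.differentiable (by simp)) (x, y)).comp x
      (differentiableAt_id.prodMk (differentiableAt_const y))
  exact h.hasDerivAt

lemma sliceY_hasDerivAt {f : ℝ × ℝ → ℝ} (hf : ContDiff ℝ (⊤ : ℕ∞) f) (x y : ℝ) :
    HasDerivAt (fun s => f (x, s)) (pdy f (x, y)) y := by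
  have h : DifferentiableAt ℝ (fun s : ℝ => f (x, s)) y :=
    ((hf.differentiable (by simp)) (x, y)).comp y
      ((differentiableAt_const x).prodMk differentiableAt_id)
  exact h.hasDerivAt

section
variable (n : ℕ) (Λ : ℝ × ℝ → ℝ) (a : ℕ → ℝ × ℝ → ℝ)

lemma pq1_H (hΛ : ContDiff ℝ (⊤ : ℕ∞) Λ) (hΛpos : ∀ z, 0 < Λ z) (x y p₁ p₂ : ℝ) :
    pq1 (fun w => (w.2.1 ^ 2 + w.2.2 ^ 2) / (2 * Λ w.1)) ((x, y), (p₁, p₂)) =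
      -((p₁ ^ 2 + p₂ ^ 2) * pdx Λ (x, y)) / (2 * (Λ (x, y)) ^ 2) := by
  have hg : HasDerivAt (fun s => 2 * Λ (s, y)) (2 * pdx Λ (x, y)) x :=
    (sliceX_hasDerivAt hΛ x y).const_mul 2
  have hc : HasDerivAt (fun _ : ℝ => p₁ ^ 2 + p₂ ^ 2) 0 x := hasDerivAt_const _ _
  have hne : 2 * Λ (x, y) ≠ 0 := by
    have := hΛpos (x, y); positivity
  have hd := hc.div hg hne
  have : pq1 (fun w => (w.2.1 ^ 2 + w.2.2 ^ 2) / (2 * Λ w.1)) ((x, y), (p₁, p₂)) =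
      (0 * (2 * Λ (x, y)) - (p₁ ^ 2 + p₂ ^ 2) * (2 * pdx Λ (x, y))) / (2 * Λ (x, y)) ^ 2 := by
    simp only [pq1]
    exact hd.deriv
  rw [this]
  have hL : Λ (x, y) ≠ 0 := ne_of_gt (hΛpos _)
  field_simp
  ring

lemma pq2_H (hΛ : ContDiff ℝ (⊤ : ℕ∞) Λ) (hΛpos : ∀ z, 0 < Λ z) (x y p₁ p₂ : ℝ) :
    pq2 (fun w => (w.2.1 ^ 2 + w.2.2 ^ 2) / (2 * Λ w.1)) ((x, y), (p₁, p₂)) =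
      -((p₁ ^ 2 + p₂ ^ 2) * pdy Λ (x, y)) / (2 * (Λ (x, y)) ^ 2) := by
  have hg : HasDerivAt (fun s => 2 * Λ (x, s)) (2 * pdy Λ (x, y)) y :=
    (sliceY_hasDerivAt hΛ x y).const_mul 2
  have hc : HasDerivAt (fun _ : ℝ => p₁ ^ 2 + p₂ ^ 2) 0 y := hasDerivAt_const _ _
  have hne : 2 * Λ (x, y) ≠ 0 := by
    have := hΛpos (x, y); positivity
  have hd := hc.div hg hne
  have : pq2 (fun w => (w.2.1 ^ 2 + w.2.2 ^ 2) / (2 * Λ w.1)) ((x, y), (p₁, p₂)) =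
      (0 * (2 * Λ (x, y)) - (p₁ ^ 2 + p₂ ^ 2) * (2 * pdy Λ (x, y))) / (2 * Λ (x, y)) ^ 2 := by
    simp only [pq2]
    exact hd.deriv
  rw [this]
  have hL : Λ (x, y) ≠ 0 := ne_of_gt (hΛpos _)
  field_simp
  ring

lemma pp1_H (x y p₁ p₂ : ℝ) :
    pp1 (fun w => (w.2.1 ^ 2 + w.2.2 ^ 2) / (2 * Λ w.1)) ((x, y), (p₁, p₂)) =
      p₁ / Λ (x, y) := by
  have hd : HasDerivAt (fun s : ℝ => (s ^ 2 + p₂ ^ 2) / (2 * Λ (x, y)))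
      ((2 * p₁ ^ 1) / (2 * Λ (x, y))) p₁ :=
    ((hasDerivAt_pow 2 p₁).add_const _).div_const _
  have : pp1 (fun w => (w.2.1 ^ 2 + w.2.2 ^ 2) / (2 * Λ w.1)) ((x, y), (p₁, p₂)) =
      (2 * p₁ ^ 1) / (2 * Λ (x, y)) := by
    simp only [pp1]
    exact hd.deriv
  rw [this]
  rw [pow_one, mul_div_mul_left _ _ (two_ne_zero)]

lemma pp2_H (x y p₁ p₂ : ℝ) :
    pp2 (fun w => (w.2.1 ^ 2 + w.2.2 ^ 2) / (2 * Λ w.1)) ((x, y), (p₁, p₂)) =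
      p₂ / Λ (x, y) := by
  have hd : HasDerivAt (fun s : ℝ => (p₁ ^ 2 + s ^ 2) / (2 * Λ (x, y)))
      ((2 * p₂ ^ 1) / (2 * Λ (x, y))) p₂ :=
    (((hasDerivAt_pow 2 p₂).const_add _)).div_const _
  have : pp2 (fun w => (w.2.1 ^ 2 + w.2.2 ^ 2) / (2 * Λ w.1)) ((x, y), (p₁, p₂)) =
      (2 * p₂ ^ 1) / (2 * Λ (x, y)) := by
    simp only [pp2]
    exact hd.deriv
  rw [this]
  rw [pow_one, mul_div_mul_left _ _ (two_ne_zero)]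

lemma pq1_F (ha : ∀ i, i ≤ n → ContDiff ℝ (⊤ : ℕ∞) (a i)) (x y p₁ p₂ : ℝ) :
    pq1 (fun w => ∑ i ∈ Finset.range (n + 1), a i w.1 * w.2.1 ^ (n - i) * w.2.2 ^ i)
      ((x, y), (p₁, p₂)) =
      ∑ i ∈ Finset.range (n + 1), pdx (a i) (x, y) * p₁ ^ (n - i) * p₂ ^ i := by
  have hd : HasDerivAt (fun s => ∑ i ∈ Finset.range (n + 1), a i (s, y) * p₁ ^ (n - i) * p₂ ^ i)
      (∑ i ∈ Finset.range (n + 1), pdx (a i) (x, y) * p₁ ^ (n - i) * p₂ ^ i) x := by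
    apply HasDerivAt.fun_sum
    intro i hi
    exact ((sliceX_hasDerivAt (ha i (Nat.lt_succ_iff.1 (Finset.mem_range.1 hi))) x y).mul_const
      _).mul_const _
  simp only [pq1]
  exact hd.deriv

lemma pq2_F (ha : ∀ i, i ≤ n → ContDiff ℝ (⊤ : ℕ∞) (a i)) (x y p₁ p₂ : ℝ) :
    pq2 (fun w => ∑ i ∈ Finset.range (n + 1), a i w.1 * w.2.1 ^ (n - i) * w.2.2 ^ i)
      ((x, y), (p₁, p₂)) =
      ∑ i ∈ Finset.range (n + 1), pdy (a i) (x, y) * p₁ ^ (n - i) * p₂ ^ i := by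
  have hd : HasDerivAt (fun s => ∑ i ∈ Finset.range (n + 1), a i (x, s) * p₁ ^ (n - i) * p₂ ^ i)
      (∑ i ∈ Finset.range (n + 1), pdy (a i) (x, y) * p₁ ^ (n - i) * p₂ ^ i) y := by
    apply HasDerivAt.fun_sum
    intro i hi
    exact ((sliceY_hasDerivAt (ha i (Nat.lt_succ_iff.1 (Finset.mem_range.1 hi))) x y).mul_const
      _).mul_const _
  simp only [pq2]
  exact hd.deriv

lemma pp1_F (x y p₁ p₂ : ℝ) :
    pp1 (fun w => ∑ i ∈ Finset.range (n + 1), a i w.1 * w.2.1 ^ (n - i) * w.2.2 ^ i)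
      ((x, y), (p₁, p₂)) =
      ∑ i ∈ Finset.range (n + 1), a i (x, y) * (((n - i : ℕ) : ℝ) * p₁ ^ (n - i - 1)) * p₂ ^ i := by
  have hd : HasDerivAt (fun s : ℝ => ∑ i ∈ Finset.range (n + 1), a i (x, y) * s ^ (n - i) * p₂ ^ i)
      (∑ i ∈ Finset.range (n + 1), a i (x, y) * (((n - i : ℕ) : ℝ) * p₁ ^ (n - i - 1)) * p₂ ^ i)
      p₁ := by
    apply HasDerivAt.fun_sum
    intro i _
    exact (((hasDerivAt_pow (n - i) p₁).const_mul (a i (x, y))).mul_const _)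
  simp only [pp1]
  exact hd.deriv

lemma pp2_F (x y p₁ p₂ : ℝ) :
    pp2 (fun w => ∑ i ∈ Finset.range (n + 1), a i w.1 * w.2.1 ^ (n - i) * w.2.2 ^ i)
      ((x, y), (p₁, p₂)) =
      ∑ i ∈ Finset.range (n + 1), a i (x, y) * p₁ ^ (n - i) * ((i : ℝ) * p₂ ^ (i - 1)) := by
  have hd : HasDerivAt (fun s : ℝ => ∑ i ∈ Finset.range (n + 1), a i (x, y) * p₁ ^ (n - i) * s ^ i)
      (∑ i ∈ Finset.range (n + 1), a i (x, y) * p₁ ^ (n - i) * ((i : ℝ) * p₂ ^ (i - 1))) p₂ := by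
    apply HasDerivAt.fun_sum
    intro i _
    have := (hasDerivAt_pow i p₂).const_mul (a i (x, y) * p₁ ^ (n - i))
    simpa [mul_assoc] using this
  simp only [pp2]
  exact hd.deriv

end

section
variable (n : ℕ) (Λ : ℝ × ℝ → ℝ) (a : ℕ → ℝ × ℝ → ℝ)

lemma poisson_value (hΛ : ContDiff ℝ (⊤ : ℕ∞) Λ) (hΛpos : ∀ z, 0 < Λ z)
    (ha : ∀ i, i ≤ n → ContDiff ℝ (⊤ : ℕ∞) (a i)) (x y p₁ p₂ : ℝ) :
    poisson (fun w => (w.2.1 ^ 2 + w.2.2 ^ 2) / (2 * Λ w.1))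
      (fun w => ∑ i ∈ Finset.range (n + 1), a i w.1 * w.2.1 ^ (n - i) * w.2.2 ^ i)
      ((x, y), (p₁, p₂)) =
      (∑ i ∈ Finset.range (n + 1), pdx (a i) (x, y) * p₁ ^ (n - i) * p₂ ^ i) * (p₁ / Λ (x, y))
      - (∑ i ∈ Finset.range (n + 1),
          a i (x, y) * (((n - i : ℕ) : ℝ) * p₁ ^ (n - i - 1)) * p₂ ^ i) *
          (-((p₁ ^ 2 + p₂ ^ 2) * pdx Λ (x, y)) / (2 * (Λ (x, y)) ^ 2))
      + (∑ i ∈ Finset.range (n + 1), pdy (a i) (x, y) * p₁ ^ (n - i) * p₂ ^ i) * (p₂ / Λ (x, y))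
      - (∑ i ∈ Finset.range (n + 1),
          a i (x, y) * p₁ ^ (n - i) * ((i : ℝ) * p₂ ^ (i - 1))) *
          (-((p₁ ^ 2 + p₂ ^ 2) * pdy Λ (x, y)) / (2 * (Λ (x, y)) ^ 2)) := by
  unfold poisson
  rw [pq1_F n a ha, pq2_F n a ha, pp1_F n a, pp2_F n a,
    pq1_H Λ hΛ hΛpos, pq2_H Λ hΛ hΛpos, pp1_H Λ, pp2_H Λ]

end

section
variable (n : ℕ) (Λ : ℝ × ℝ → ℝ) (a : ℕ → ℝ × ℝ → ℝ)

lemma poly_zero (hΛ : ContDiff ℝ (⊤ : ℕ∞) Λ) (hΛpos : ∀ z, 0 < Λ z)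
    (ha : ∀ i, i ≤ n → ContDiff ℝ (⊤ : ℕ∞) (a i))
    (hHF : ∀ z, poisson
      (fun w => (w.2.1 ^ 2 + w.2.2 ^ 2) / (2 * Λ w.1))
      (fun w => ∑ i ∈ Finset.range (n + 1), a i w.1 * w.2.1 ^ (n - i) * w.2.2 ^ i) z = 0)
    (x y : ℝ) :
    ((∑ i ∈ Finset.range (n + 1), C (2 * Λ (x, y) * pdx (a i) (x, y)) * X ^ i)
    + (∑ i ∈ Finset.range (n + 1), C (2 * Λ (x, y) * pdy (a i) (x, y)) * X ^ (i + 1))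
    + (∑ i ∈ Finset.range (n + 1),
        C (pdx Λ (x, y) * (((n : ℝ) - i) * a i (x, y))) * X ^ i)
    + (∑ i ∈ Finset.range (n + 1),
        C (pdx Λ (x, y) * (((n : ℝ) - i) * a i (x, y))) * X ^ (i + 2))
    + (∑ i ∈ Finset.range n,
        C (pdy Λ (x, y) * (((i : ℝ) + 1) * a (i + 1) (x, y))) * X ^ i)
    + (∑ i ∈ Finset.range n,
        C (pdy Λ (x, y) * (((i : ℝ) + 1) * a (i + 1) (x, y))) * X ^ (i + 2))
    : Polynomial ℝ) = 0 := by
  set L := Λ (x, y) with hLdef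
  set Lx := pdx Λ (x, y)
  set Ly := pdy Λ (x, y)
  have hL : L ≠ 0 := ne_of_gt (hΛpos _)
  apply Polynomial.funext
  intro t
  rw [eval_zero]
  have hV := hHF ((x, y), (1, t))
  rw [poisson_value n Λ a hΛ hΛpos ha x y 1 t] at hV
  set SA := ∑ i ∈ Finset.range (n + 1), pdx (a i) (x, y) * t ^ i with hSA
  set SB := ∑ i ∈ Finset.range (n + 1), pdy (a i) (x, y) * t ^ i with hSB
  set SC := ∑ i ∈ Finset.range (n + 1), ((n : ℝ) - i) * a i (x, y) * t ^ i with hSC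
  set SD := ∑ i ∈ Finset.range n, ((i : ℝ) + 1) * a (i + 1) (x, y) * t ^ i with hSD
  have e1 : ∑ i ∈ Finset.range (n + 1), pdx (a i) (x, y) * (1 : ℝ) ^ (n - i) * t ^ i = SA := by
    apply Finset.sum_congr rfl; intro i _; rw [one_pow, mul_one]
  have e2 : ∑ i ∈ Finset.range (n + 1), pdy (a i) (x, y) * (1 : ℝ) ^ (n - i) * t ^ i = SB := by
    apply Finset.sum_congr rfl; intro i _; rw [one_pow, mul_one]
  have e3 : ∑ i ∈ Finset.range (n + 1),
      a i (x, y) * (((n - i : ℕ) : ℝ) * (1 : ℝ) ^ (n - i - 1)) * t ^ i = SC := by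
    apply Finset.sum_congr rfl; intro i hi
    have hi' : i ≤ n := Nat.lt_succ_iff.1 (Finset.mem_range.1 hi)
    rw [Nat.cast_sub hi', one_pow, mul_one]
    ring
  have e4 : ∑ i ∈ Finset.range (n + 1),
      a i (x, y) * (1 : ℝ) ^ (n - i) * ((i : ℝ) * t ^ (i - 1)) = SD := by
    rw [Finset.sum_range_succ']
    simp only [Nat.cast_zero, zero_mul, mul_zero, add_zero, one_pow, mul_one]
    apply Finset.sum_congr rfl; intro i _
    push_cast
    ring
  rw [e1, e2, e3, e4] at hV
  have heval : ∀ (c : ℕ → ℝ) (N d : ℕ),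
      eval t (∑ i ∈ Finset.range N, C (c i) * X ^ (i + d)) =
        ∑ i ∈ Finset.range N, c i * t ^ (i + d) := by
    intro c N d
    rw [eval_finset_sum]
    apply Finset.sum_congr rfl; intro i _
    simp
  simp only [eval_add]
  have g0 : ∀ (c : ℕ → ℝ) (N : ℕ),
      eval t (∑ i ∈ Finset.range N, C (c i) * X ^ i) =
        ∑ i ∈ Finset.range N, c i * t ^ i := by
    intro c N
    rw [eval_finset_sum]
    apply Finset.sum_congr rfl; intro i _
    simp
  rw [g0 (fun i => 2 * L * pdx (a i) (x, y)), g0 (fun i => Lx * (((n : ℝ) - i) * a i (x, y))),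
    g0 (fun i => Ly * (((i : ℝ) + 1) * a (i + 1) (x, y))),
    heval (fun i => 2 * L * pdy (a i) (x, y)) (n + 1) 1,
    heval (fun i => Lx * (((n : ℝ) - i) * a i (x, y))) (n + 1) 2,
    heval (fun i => Ly * (((i : ℝ) + 1) * a (i + 1) (x, y))) n 2]
  have h1 : ∑ i ∈ Finset.range (n + 1), 2 * L * pdx (a i) (x, y) * t ^ i = 2 * L * SA := by
    rw [hSA, Finset.mul_sum]; apply Finset.sum_congr rfl; intro i _; ring
  have h2 : ∑ i ∈ Finset.range (n + 1), 2 * L * pdy (a i) (x, y) * t ^ (i + 1) =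
      2 * L * t * SB := by
    rw [hSB, Finset.mul_sum]; apply Finset.sum_congr rfl; intro i _
    rw [pow_succ]; ring
  have h3 : ∑ i ∈ Finset.range (n + 1), Lx * (((n : ℝ) - i) * a i (x, y)) * t ^ i = Lx * SC := by
    rw [hSC, Finset.mul_sum]; apply Finset.sum_congr rfl; intro i _; ring
  have h4 : ∑ i ∈ Finset.range (n + 1), Lx * (((n : ℝ) - i) * a i (x, y)) * t ^ (i + 2) =
      Lx * t ^ 2 * SC := by
    rw [hSC, Finset.mul_sum]; apply Finset.sum_congr rfl; intro i _
    rw [pow_add]; ring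
  have h5 : ∑ i ∈ Finset.range n, Ly * (((i : ℝ) + 1) * a (i + 1) (x, y)) * t ^ i = Ly * SD := by
    rw [hSD, Finset.mul_sum]; apply Finset.sum_congr rfl; intro i _; ring
  have h6 : ∑ i ∈ Finset.range n, Ly * (((i : ℝ) + 1) * a (i + 1) (x, y)) * t ^ (i + 2) =
      Ly * t ^ 2 * SD := by
    rw [hSD, Finset.mul_sum]; apply Finset.sum_congr rfl; intro i _
    rw [pow_add]; ring
  rw [h1, h2, h3, h4, h5, h6]
  have key : 2 * L * SA + 2 * L * t * SB + Lx * SC + Lx * t ^ 2 * SC + Ly * SD + Ly * t ^ 2 * SD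
      = 2 * L ^ 2 *
        (SA * (1 / L) - SC * (-((1 ^ 2 + t ^ 2) * Lx) / (2 * L ^ 2))
          + SB * (t / L) - SD * (-((1 ^ 2 + t ^ 2) * Ly) / (2 * L ^ 2))) := by
    field_simp
    ring
  rw [key, hV, mul_zero]

lemma coeff_sum_pow_shift (c : ℕ → ℝ) (N d m : ℕ) :
    Polynomial.coeff (∑ i ∈ Finset.range N, C (c i) * X ^ (i + d)) m
      = if d ≤ m ∧ m - d < N then c (m - d) else 0 := by
  rw [finset_sum_coeff]
  have h : ∀ i, (C (c i) * (X : Polynomial ℝ) ^ (i + d)).coeff m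
      = if m = i + d then c i else 0 := by
    intro i
    rw [coeff_C_mul, coeff_X_pow]
    split <;> simp
  simp only [h]
  by_cases hc : d ≤ m ∧ m - d < N
  · rw [if_pos hc, Finset.sum_eq_single (m - d)]
    · rw [if_pos (by omega)]
    · intro i _ hne
      rw [if_neg (by omega)]
    · intro hmem
      exact absurd (Finset.mem_range.2 hc.2) hmem
  · rw [if_neg hc]
    apply Finset.sum_eq_zero
    intro i hi
    have := Finset.mem_range.1 hi
    rw [if_neg (by omega)]

lemma coeff_sum_pow (c : ℕ → ℝ) (N m : ℕ) :
    Polynomial.coeff (∑ i ∈ Finset.range N, C (c i) * X ^ i) m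
      = if m < N then c m else 0 := by
  have := coeff_sum_pow_shift c N 0 m
  simp only [Nat.add_zero, Nat.sub_zero, Nat.zero_le, true_and] at this
  exact this

section
variable (n : ℕ) (Λ : ℝ × ℝ → ℝ) (a : ℕ → ℝ × ℝ → ℝ)

lemma E_mid (hΛ : ContDiff ℝ (⊤ : ℕ∞) Λ) (hΛpos : ∀ z, 0 < Λ z)
    (ha : ∀ i, i ≤ n → ContDiff ℝ (⊤ : ℕ∞) (a i))
    (hHF : ∀ z, poisson
      (fun w => (w.2.1 ^ 2 + w.2.2 ^ 2) / (2 * Λ w.1))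
      (fun w => ∑ i ∈ Finset.range (n + 1), a i w.1 * w.2.1 ^ (n - i) * w.2.2 ^ i) z = 0)
    (x y : ℝ) (m : ℕ) (h1 : 1 ≤ m) (h2 : m ≤ n - 1) (hn1 : 1 ≤ n) :
    2 * Λ (x, y) * pdx (a m) (x, y) + 2 * Λ (x, y) * pdy (a (m - 1)) (x, y)
      + pdx Λ (x, y) * (((n : ℝ) - m) * a m (x, y)
          + ((n : ℝ) - m + 2) * (if 2 ≤ m then a (m - 2) (x, y) else 0))
      + pdy Λ (x, y) * (((m : ℝ) + 1) * a (m + 1) (x, y)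
          + ((m : ℝ) - 1) * a (m - 1) (x, y)) = 0 := by
  have hp := poly_zero n Λ a hΛ hΛpos ha hHF x y
  have hc := congrArg (fun p => Polynomial.coeff p m) hp
  simp only [coeff_zero, coeff_add] at hc
  rw [coeff_sum_pow (fun i => 2 * Λ (x, y) * pdx (a i) (x, y)),
    coeff_sum_pow (fun i => pdx Λ (x, y) * (((n : ℝ) - i) * a i (x, y))),
    coeff_sum_pow (fun i => pdy Λ (x, y) * (((i : ℝ) + 1) * a (i + 1) (x, y))),
    coeff_sum_pow_shift (fun i => 2 * Λ (x, y) * pdy (a i) (x, y)) (n + 1) 1,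
    coeff_sum_pow_shift (fun i => pdx Λ (x, y) * (((n : ℝ) - i) * a i (x, y))) (n + 1) 2,
    coeff_sum_pow_shift (fun i => pdy Λ (x, y) * (((i : ℝ) + 1) * a (i + 1) (x, y))) n 2] at hc
  simp only [if_pos (show m < n + 1 by omega), if_pos (show 1 ≤ m ∧ m - 1 < n + 1 by omega),
    if_pos (show m < n by omega)] at hc
  rcases Nat.lt_or_ge m 2 with hm2 | hm2
  · have hm1 : m = 1 := by omega
    subst hm1
    simp only [if_neg (show ¬(2 ≤ 1 ∧ 1 - 2 < n + 1) by omega),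
      if_neg (show ¬(2 ≤ 1 ∧ 1 - 2 < n) by omega)] at hc
    rw [if_neg (by omega : ¬(2 ≤ 1))]
    push_cast at hc ⊢
    linear_combination hc
  · simp only [if_pos (show 2 ≤ m ∧ m - 2 < n + 1 by omega),
      if_pos (show 2 ≤ m ∧ m - 2 < n by omega)] at hc
    rw [if_pos hm2]
    have e1 : m - 2 + 1 = m - 1 := by omega
    rw [e1, Nat.cast_sub hm2] at hc
    push_cast at hc ⊢
    linear_combination hc

lemma E_zero (hΛ : ContDiff ℝ (⊤ : ℕ∞) Λ) (hΛpos : ∀ z, 0 < Λ z)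
    (ha : ∀ i, i ≤ n → ContDiff ℝ (⊤ : ℕ∞) (a i))
    (hHF : ∀ z, poisson
      (fun w => (w.2.1 ^ 2 + w.2.2 ^ 2) / (2 * Λ w.1))
      (fun w => ∑ i ∈ Finset.range (n + 1), a i w.1 * w.2.1 ^ (n - i) * w.2.2 ^ i) z = 0)
    (x y : ℝ) (hn1 : 1 ≤ n) :
    2 * Λ (x, y) * pdx (a 0) (x, y) + pdx Λ (x, y) * ((n : ℝ) * a 0 (x, y))
      + pdy Λ (x, y) * a 1 (x, y) = 0 := by
  have hp := poly_zero n Λ a hΛ hΛpos ha hHF x y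
  have hc := congrArg (fun p => Polynomial.coeff p 0) hp
  simp only [coeff_zero, coeff_add] at hc
  rw [coeff_sum_pow (fun i => 2 * Λ (x, y) * pdx (a i) (x, y)),
    coeff_sum_pow (fun i => pdx Λ (x, y) * (((n : ℝ) - i) * a i (x, y))),
    coeff_sum_pow (fun i => pdy Λ (x, y) * (((i : ℝ) + 1) * a (i + 1) (x, y))),
    coeff_sum_pow_shift (fun i => 2 * Λ (x, y) * pdy (a i) (x, y)) (n + 1) 1,
    coeff_sum_pow_shift (fun i => pdx Λ (x, y) * (((n : ℝ) - i) * a i (x, y))) (n + 1) 2,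
    coeff_sum_pow_shift (fun i => pdy Λ (x, y) * (((i : ℝ) + 1) * a (i + 1) (x, y))) n 2] at hc
  simp only [if_pos (show 0 < n + 1 by omega), if_pos (show (0:ℕ) < n by omega),
    if_neg (show ¬((1:ℕ) ≤ 0 ∧ 0 - 1 < n + 1) by omega),
    if_neg (show ¬((2:ℕ) ≤ 0 ∧ 0 - 2 < n + 1) by omega),
    if_neg (show ¬((2:ℕ) ≤ 0 ∧ 0 - 2 < n) by omega)] at hc
  push_cast at hc ⊢
  linear_combination hc

lemma E_top (hΛ : ContDiff ℝ (⊤ : ℕ∞) Λ) (hΛpos : ∀ z, 0 < Λ z)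
    (ha : ∀ i, i ≤ n → ContDiff ℝ (⊤ : ℕ∞) (a i))
    (hHF : ∀ z, poisson
      (fun w => (w.2.1 ^ 2 + w.2.2 ^ 2) / (2 * Λ w.1))
      (fun w => ∑ i ∈ Finset.range (n + 1), a i w.1 * w.2.1 ^ (n - i) * w.2.2 ^ i) z = 0)
    (x y : ℝ) (hn1 : 1 ≤ n) :
    2 * Λ (x, y) * pdy (a n) (x, y) + pdx Λ (x, y) * a (n - 1) (x, y)
      + pdy Λ (x, y) * ((n : ℝ) * a n (x, y)) = 0 := by
  have hp := poly_zero n Λ a hΛ hΛpos ha hHF x y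
  have hc := congrArg (fun p => Polynomial.coeff p (n + 1)) hp
  simp only [coeff_zero, coeff_add] at hc
  rw [coeff_sum_pow (fun i => 2 * Λ (x, y) * pdx (a i) (x, y)),
    coeff_sum_pow (fun i => pdx Λ (x, y) * (((n : ℝ) - i) * a i (x, y))),
    coeff_sum_pow (fun i => pdy Λ (x, y) * (((i : ℝ) + 1) * a (i + 1) (x, y))),
    coeff_sum_pow_shift (fun i => 2 * Λ (x, y) * pdy (a i) (x, y)) (n + 1) 1,
    coeff_sum_pow_shift (fun i => pdx Λ (x, y) * (((n : ℝ) - i) * a i (x, y))) (n + 1) 2,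
    coeff_sum_pow_shift (fun i => pdy Λ (x, y) * (((i : ℝ) + 1) * a (i + 1) (x, y))) n 2] at hc
  simp only [if_neg (show ¬(n + 1 < n + 1) by omega), if_neg (show ¬(n + 1 < n) by omega),
    if_pos (show 1 ≤ n + 1 ∧ n + 1 - 1 < n + 1 by omega),
    if_pos (show 2 ≤ n + 1 ∧ n + 1 - 2 < n + 1 by omega),
    if_pos (show 2 ≤ n + 1 ∧ n + 1 - 2 < n by omega)] at hc
  have e1 : n + 1 - 1 = n := by omega
  have e2 : n + 1 - 2 = n - 1 := by omega
  have e3 : n - 1 + 1 = n := by omega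
  rw [e1, e2, e3, Nat.cast_sub hn1] at hc
  push_cast at hc ⊢
  linear_combination hc

end

lemma odd_comb (K : ℕ) (N L Lx Ly : ℝ) (A Ax Ay : ℕ → ℝ)
    (hN : N = 2 * ((K : ℝ) + 1) + 1)
    (hE : ∀ m : ℕ, 1 ≤ m → m ≤ 2 * (K + 1) →
      2*L*Ax m + 2*L*Ay (m-1)
        + Lx*((N - (m:ℝ))*A m + (N - (m:ℝ) + 2)*(if 2 ≤ m then A (m-2) else 0))
        + Ly*(((m:ℝ)+1)*A (m+1) + ((m:ℝ)-1)*A (m-1)) = 0)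
    (hKol : ∑ m ∈ Finset.range (K+2), (-1:ℝ)^m * A (2*m) = 0) :
    ∑ j ∈ Finset.range (K+1), (-1:ℝ)^j * (N - 1 - 2*(j:ℝ)) *
      (Ax (2*j+1) * L + A (2*j+1) * Lx + Ay (2*j) * L + A (2*j) * Ly) = 0 := by
  set D : ℕ → ℝ := fun j => (-1:ℝ)^j * (N - 1 - 2*(j:ℝ)) with hD
  set A1 : ℕ → ℝ := fun j => D j * (2*L*Ax (2*j+1) + 2*L*Ay (2*j)) with hA1
  set A2 : ℕ → ℝ := fun j => D j * Lx * ((N - 1 - 2*(j:ℝ)) * A (2*j+1)) with hA2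
  set A3 : ℕ → ℝ := fun j =>
    D j * Lx * ((N + 1 - 2*(j:ℝ)) * (if 2 ≤ 2*j+1 then A (2*j+1-2) else 0)) with hA3
  set A3' : ℕ → ℝ := fun j => D j * Lx * ((2 - (N - 1 - 2*(j:ℝ))) * A (2*j+1)) with hA3'
  set A4 : ℕ → ℝ := fun j => D j * Ly * ((2*(j:ℝ)+2) * A (2*j+2)) with hA4
  set A5 : ℕ → ℝ := fun j => D j * Ly * ((2*(j:ℝ)) * A (2*j)) with hA5
  set Q : ℕ → ℝ := fun m => (-1:ℝ)^(m+1) * (N + 1 - 2*(m:ℝ)) * Ly * ((2*(m:ℝ)) * A (2*m)) with hQ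
  set T : ℕ → ℝ := fun j =>
    D j * (Ax (2*j+1) * L + A (2*j+1) * Lx + Ay (2*j) * L + A (2*j) * Ly) with hT
  -- step 1: the E-combination splits
  have step1 : ∑ j ∈ Finset.range (K+1), (A1 j + A2 j + A3 j + A4 j + A5 j) = 0 := by
    apply Finset.sum_eq_zero
    intro j hj
    have hjK : j ≤ K := Nat.lt_succ_iff.1 (Finset.mem_range.1 hj)
    have h := hE (2*j+1) (by omega) (by omega)
    have i1 : 2*j+1-1 = 2*j := by omega
    have i2 : 2*j+1+1 = 2*j+2 := by omega
    rw [i1, i2] at h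
    have : A1 j + A2 j + A3 j + A4 j + A5 j = D j *
        (2*L*Ax (2*j+1) + 2*L*Ay (2*j)
        + Lx*((N - ((2*j+1 : ℕ):ℝ))*A (2*j+1)
            + (N - ((2*j+1 : ℕ):ℝ) + 2)*(if 2 ≤ 2*j+1 then A (2*j+1-2) else 0))
        + Ly*((((2*j+1 : ℕ):ℝ)+1)*A (2*j+2) + (((2*j+1 : ℕ):ℝ)-1)*A (2*j))) := by
      simp only [hA1, hA2, hA3, hA4, hA5, hD]
      push_cast
      ring
    rw [this, h, mul_zero]
  -- step 2: reindex A3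
  have step2 : ∑ j ∈ Finset.range (K+1), A3 j = ∑ j ∈ Finset.range (K+1), A3' j := by
    rw [Finset.sum_range_succ' A3 K, Finset.sum_range_succ A3' K]
    have h0 : A3 0 = 0 := by
      simp only [hA3]
      rw [if_neg (by omega : ¬ (2 ≤ 2*0+1))]
      ring
    have htop : A3' K = 0 := by
      simp only [hA3', hD, hN]; ring
    rw [h0, htop, add_zero, add_zero]
    apply Finset.sum_congr rfl
    intro i _
    simp only [hA3, hA3', hD]
    rw [if_pos (by omega : 2 ≤ 2*(i+1)+1), (by omega : 2*(i+1)+1-2 = 2*i+1)]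
    push_cast
    rw [pow_succ]
    ring
  -- step 3: reindex A4
  have step3 : ∑ j ∈ Finset.range (K+1), A4 j = ∑ m ∈ Finset.range (K+2), Q m := by
    rw [Finset.sum_range_succ' Q (K+1)]
    have h0 : Q 0 = 0 := by simp only [hQ]; norm_num
    rw [h0, add_zero]
    apply Finset.sum_congr rfl
    intro j _
    simp only [hA4, hQ, hD]
    push_cast
    rw [pow_succ, pow_succ]
    ring
  -- assemble
  have hsplit : ∑ j ∈ Finset.range (K+1), (A1 j + A2 j + A3 j + A4 j + A5 j)
      = ∑ j ∈ Finset.range (K+1), A1 j + ∑ j ∈ Finset.range (K+1), A2 j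
        + ∑ j ∈ Finset.range (K+1), A3 j + ∑ j ∈ Finset.range (K+1), A4 j
        + ∑ j ∈ Finset.range (K+1), A5 j := by
    simp only [Finset.sum_add_distrib]
  have hKol' : ∑ m ∈ Finset.range (K+1), (-1:ℝ)^m * A (2*m)
      + (-1:ℝ)^(K+1) * A (2*(K+1)) = 0 := by
    rw [← Finset.sum_range_succ (fun m => (-1:ℝ)^m * A (2*m)) (K+1)]
    exact hKol
  have hQsplit : ∑ m ∈ Finset.range (K+2), Q m
      = ∑ m ∈ Finset.range (K+1), Q m + Q (K+1) :=
    Finset.sum_range_succ Q (K+1)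
  -- final per-term identity
  have hmain : ∑ j ∈ Finset.range (K+1),
      (A1 j + A2 j + A3' j + A5 j + Q j + (4*((K:ℝ)+1)*Ly) * ((-1:ℝ)^j * A (2*j)))
      = ∑ j ∈ Finset.range (K+1), 2 * T j := by
    apply Finset.sum_congr rfl
    intro j _
    simp only [hA1, hA2, hA3', hA5, hQ, hT, hD, hN]
    rw [pow_succ]
    ring
  have hQtop : Q (K+1) + (4*((K:ℝ)+1)*Ly) * ((-1:ℝ)^(K+1) * A (2*(K+1))) = 0 := by
    simp only [hQ, hN]
    push_cast
    rw [pow_succ, pow_succ]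
    ring
  -- combine everything
  have expand1 : ∑ j ∈ Finset.range (K+1),
      (A1 j + A2 j + A3' j + A5 j + Q j + (4*((K:ℝ)+1)*Ly) * ((-1:ℝ)^j * A (2*j)))
      = ∑ j ∈ Finset.range (K+1), A1 j + ∑ j ∈ Finset.range (K+1), A2 j
        + ∑ j ∈ Finset.range (K+1), A3' j + ∑ j ∈ Finset.range (K+1), A5 j
        + ∑ j ∈ Finset.range (K+1), Q j
        + (4*((K:ℝ)+1)*Ly) * ∑ j ∈ Finset.range (K+1), ((-1:ℝ)^j * A (2*j)) := by
    simp only [Finset.sum_add_distrib, Finset.mul_sum]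
  have expand2 : ∑ j ∈ Finset.range (K+1), 2 * T j
      = 2 * ∑ j ∈ Finset.range (K+1), T j := by
    rw [Finset.mul_sum]
  have final : 2 * ∑ j ∈ Finset.range (K+1), T j = 0 := by
    have e1 := step1
    rw [hsplit, step2, step3, hQsplit] at e1
    have e2 : ∑ m ∈ Finset.range (K+1), (-1:ℝ)^m * A (2*m)
        = - ((-1:ℝ)^(K+1) * A (2*(K+1))) := by linarith [hKol']
    rw [← expand2, ← hmain, expand1, e2]
    linarith [e1, hQtop]
  have h2 : (2:ℝ) ≠ 0 := two_ne_zero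
  have := mul_eq_zero.1 final
  rcases this with h | h
  · exact absurd h h2
  · exact h

lemma even_comb (K : ℕ) (N L Lx Ly c₂ : ℝ) (A Ax Ay : ℕ → ℝ)
    (hN : N = 2 * ((K : ℝ) + 1) + 1)
    (hE : ∀ m : ℕ, 1 ≤ m → m ≤ 2 * (K + 1) →
      2*L*Ax m + 2*L*Ay (m-1)
        + Lx*((N - (m:ℝ))*A m + (N - (m:ℝ) + 2)*(if 2 ≤ m then A (m-2) else 0))
        + Ly*(((m:ℝ)+1)*A (m+1) + ((m:ℝ)-1)*A (m-1)) = 0)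
    (hE0 : 2*L*Ax 0 + Lx*(N*A 0) + Ly*A 1 = 0)
    (hEtop : 2*L*Ay (2*(K+1)+1) + Lx*A (2*(K+1)) + Ly*(N*A (2*(K+1)+1)) = 0)
    (hKolg : ∑ m ∈ Finset.range (K+2), (-1:ℝ)^m * A (2*m) = 0)
    (hKolh : ∑ m ∈ Finset.range (K+2), (-1:ℝ)^m * A (2*m+1) = (-1:ℝ)^(K+1) * c₂)
    (hKolgx : ∑ m ∈ Finset.range (K+2), (-1:ℝ)^m * Ax (2*m) = 0)
    (hKolhy : ∑ m ∈ Finset.range (K+2), (-1:ℝ)^m * Ay (2*m+1) = 0) :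
    ∑ j ∈ Finset.range (K+1), ((-1:ℝ)^j * (N - 1 - 2*(j:ℝ)) * (Ax (2*j) * L + A (2*j) * Lx)
      - (-1:ℝ)^j * (N - 1 - 2*(j:ℝ)) * (Ay (2*j+1) * L + A (2*j+1) * Ly))
      + (-1:ℝ)^(K+1) * N * c₂ * Ly = 0 := by
  set e : ℕ → ℝ := fun m => (-1:ℝ)^m * (N - 2*(m:ℝ)) with he
  set D : ℕ → ℝ := fun j => (-1:ℝ)^j * (N - 1 - 2*(j:ℝ)) with hD
  set F1 : ℕ → ℝ := fun m => e m * (2*L*Ax (2*m)) with hF1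
  set F2 : ℕ → ℝ := fun m => e (m+1) * (2*L*Ay (2*m+1)) with hF2
  set F3 : ℕ → ℝ := fun m => e m * ((N - 2*(m:ℝ)) * (Lx * A (2*m))) with hF3
  set F4 : ℕ → ℝ := fun m => e (m+1) * ((N - 2*(m:ℝ)) * (Lx * A (2*m))) with hF4
  set F5 : ℕ → ℝ := fun m => e m * ((2*(m:ℝ)+1) * (Ly * A (2*m+1))) with hF5
  set F6 : ℕ → ℝ := fun m => e (m+1) * ((2*(m:ℝ)+1) * (Ly * A (2*m+1))) with hF6
  set T2 : ℕ → ℝ := fun j => D j * (Ax (2*j) * L + A (2*j) * Lx)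
      - D j * (Ay (2*j+1) * L + A (2*j+1) * Ly) with hT2
  -- the E-combination is zero
  have hmid : ∑ j ∈ Finset.range (K+1),
      (F1 (j+1) + F2 j + F3 (j+1) + F4 j + F5 (j+1) + F6 j) = 0 := by
    apply Finset.sum_eq_zero
    intro j hj
    have hjK : j ≤ K := Nat.lt_succ_iff.1 (Finset.mem_range.1 hj)
    have h := hE (2*j+2) (by omega) (by omega)
    have i1 : 2*j+2-1 = 2*j+1 := by omega
    have i2 : 2*j+2+1 = 2*(j+1)+1 := by omega
    have i3 : 2*j+2-2 = 2*j := by omega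
    rw [i1, i2, i3, if_pos (by omega : 2 ≤ 2*j+2)] at h
    have e1 : 2*(j+1) = 2*j+2 := by omega
    have : F1 (j+1) + F2 j + F3 (j+1) + F4 j + F5 (j+1) + F6 j
        = e (j+1) * (2*L*Ax (2*j+2) + 2*L*Ay (2*j+1)
          + Lx*((N - ((2*j+2 : ℕ):ℝ))*A (2*j+2) + (N - ((2*j+2 : ℕ):ℝ) + 2)*(A (2*j)))
          + Ly*((((2*j+2 : ℕ):ℝ)+1)*A (2*(j+1)+1) + (((2*j+2 : ℕ):ℝ)-1)*A (2*j+1))) := by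
      simp only [hF1, hF2, hF3, hF4, hF5, hF6, he, e1]
      push_cast
      rw [pow_succ]
      ring
    rw [this, h, mul_zero]
  have hzero0 : F1 0 + F3 0 + F5 0 = 0 := by
    have : F1 0 + F3 0 + F5 0 = e 0 * (2*L*Ax 0 + Lx*(N*A 0) + Ly*A 1) := by
      simp only [hF1, hF3, hF5, he]
      push_cast
      ring
    rw [this, hE0, mul_zero]
  have hzerotop : F2 (K+1) + F4 (K+1) + F6 (K+1) = 0 := by
    have : F2 (K+1) + F4 (K+1) + F6 (K+1)
        = e (K+2) * (2*L*Ay (2*(K+1)+1) + Lx*A (2*(K+1)) + Ly*(N*A (2*(K+1)+1))) := by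
      simp only [hF2, hF4, hF6, he, hN]
      push_cast
      ring
    rw [this, hEtop, mul_zero]
  have hF : ∑ m ∈ Finset.range (K+2), (F1 m + F2 m + F3 m + F4 m + F5 m + F6 m) = 0 := by
    simp only [Finset.sum_add_distrib]
    rw [Finset.sum_range_succ' F1 (K+1), Finset.sum_range_succ' F3 (K+1),
      Finset.sum_range_succ' F5 (K+1),
      Finset.sum_range_succ F2 (K+1), Finset.sum_range_succ F4 (K+1),
      Finset.sum_range_succ F6 (K+1)]
    have hsum : ∑ j ∈ Finset.range (K+1), F1 (j+1) + ∑ j ∈ Finset.range (K+1), F2 j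
        + ∑ j ∈ Finset.range (K+1), F3 (j+1) + ∑ j ∈ Finset.range (K+1), F4 j
        + ∑ j ∈ Finset.range (K+1), F5 (j+1) + ∑ j ∈ Finset.range (K+1), F6 j
        = ∑ j ∈ Finset.range (K+1),
            (F1 (j+1) + F2 j + F3 (j+1) + F4 j + F5 (j+1) + F6 j) := by
      simp only [Finset.sum_add_distrib]
    linarith [hmid, hzero0, hzerotop, hsum]
  -- main per-term comparison
  have hmain : ∑ m ∈ Finset.range (K+2), (2 * T2 m)
      = ∑ m ∈ Finset.range (K+2), ((F1 m + F2 m + F3 m + F4 m + F5 m + F6 m)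
        - 2*L*((-1:ℝ)^m * Ax (2*m)) - 2*L*((-1:ℝ)^m * Ay (2*m+1))
        - 2*Lx*((-1:ℝ)^m * A (2*m)) - 2*N*Ly*((-1:ℝ)^m * A (2*m+1))) := by
    apply Finset.sum_congr rfl
    intro m _
    simp only [hF1, hF2, hF3, hF4, hF5, hF6, hT2, hD, he]
    push_cast
    rw [pow_succ]
    ring
  have hexp : ∑ m ∈ Finset.range (K+2), ((F1 m + F2 m + F3 m + F4 m + F5 m + F6 m)
        - 2*L*((-1:ℝ)^m * Ax (2*m)) - 2*L*((-1:ℝ)^m * Ay (2*m+1))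
        - 2*Lx*((-1:ℝ)^m * A (2*m)) - 2*N*Ly*((-1:ℝ)^m * A (2*m+1)))
      = ∑ m ∈ Finset.range (K+2), (F1 m + F2 m + F3 m + F4 m + F5 m + F6 m)
        - 2*L*∑ m ∈ Finset.range (K+2), ((-1:ℝ)^m * Ax (2*m))
        - 2*L*∑ m ∈ Finset.range (K+2), ((-1:ℝ)^m * Ay (2*m+1))
        - 2*Lx*∑ m ∈ Finset.range (K+2), ((-1:ℝ)^m * A (2*m))
        - 2*N*Ly*∑ m ∈ Finset.range (K+2), ((-1:ℝ)^m * A (2*m+1)) := by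
    simp only [Finset.sum_sub_distrib, Finset.mul_sum]
  have hT2sum : ∑ m ∈ Finset.range (K+2), (2 * T2 m)
      = 2 * (∑ j ∈ Finset.range (K+1), T2 j + T2 (K+1)) := by
    rw [← Finset.sum_range_succ T2 (K+1), Finset.mul_sum]
  have hT2top : T2 (K+1) = 0 := by
    simp only [hT2, hD, hN]
    push_cast
    ring
  rw [hexp, hF, hKolg, hKolh, hKolgx, hKolhy] at hmain
  rw [hT2sum, hT2top, add_zero] at hmain
  have : ∑ j ∈ Finset.range (K+1), T2 j = - ((-1:ℝ)^(K+1) * N * c₂ * Ly) := by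
    have h2 : (2:ℝ) ≠ 0 := two_ne_zero
    field_simp at hmain
    linarith [hmain]
  rw [this]
  ring

lemma sum_Icc_one (f : ℕ → ℝ) (k : ℕ) :
    ∑ j ∈ Finset.Icc 1 k, f j = ∑ i ∈ Finset.range k, f (i + 1) := by
  induction k with
  | zero => simp
  | succ m ih =>
      rw [Finset.sum_Icc_succ_top (Nat.le_add_left 1 m), ih, Finset.sum_range_succ]

lemma kol_range (k : ℕ) (c : ℝ) (f : ℕ → ℝ)
    (h : f k = c + ∑ j ∈ Finset.Icc 1 k, (-1:ℝ)^(j+1) * f (k - j)) :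
    ∑ m ∈ Finset.range (k+1), (-1:ℝ)^m * f m = (-1:ℝ)^k * c := by
  rw [Finset.sum_range_succ, h, sum_Icc_one (fun j => (-1:ℝ)^(j+1) * f (k - j)) k]
  have hrefl : ∑ i ∈ Finset.range k, (-1:ℝ)^(i+1+1) * f (k - (i+1))
      = ∑ j ∈ Finset.range k, (-1:ℝ)^(k+1-j) * f j := by
    rw [← Finset.sum_range_reflect (fun i => (-1:ℝ)^(i+1+1) * f (k - (i+1))) k]
    apply Finset.sum_congr rfl
    intro j hj
    have hjk : j < k := Finset.mem_range.1 hj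
    have i1 : k - 1 - j + 1 + 1 = k + 1 - j := by omega
    have i2 : k - (k - 1 - j + 1) = j := by omega
    rw [i1, i2]
  rw [hrefl, mul_add, Finset.mul_sum]
  have key : ∑ j ∈ Finset.range k,
      ((-1:ℝ)^j * f j + (-1:ℝ)^k * ((-1:ℝ)^(k+1-j) * f j)) = 0 := by
    apply Finset.sum_eq_zero
    intro j hj
    have hjk : j < k := Finset.mem_range.1 hj
    have hpow : (-1:ℝ)^k * (-1:ℝ)^(k+1-j) = (-1:ℝ)^(j+1) := by
      rw [← pow_add]
      rw [show k + (k+1-j) = 2*(k-j) + (j+1) from by omega]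
      rw [pow_add, pow_mul, neg_one_sq, one_pow, one_mul]
    calc (-1:ℝ)^j * f j + (-1:ℝ)^k * ((-1:ℝ)^(k+1-j) * f j)
        = (-1:ℝ)^j * f j + ((-1:ℝ)^k * (-1:ℝ)^(k+1-j)) * f j := by ring
      _ = 0 := by rw [hpow, pow_succ]; ring
  rw [Finset.sum_add_distrib] at key
  linarith [key]

theorem PQR_conservation_odd_degree
    (k : ℕ) (hk : 1 ≤ k) (n : ℕ) (hn : n = 2 * k + 1)
    (Λ : ℝ × ℝ → ℝ) (a : ℕ → ℝ × ℝ → ℝ) (c₂ : ℝ)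
    (hΛ : ContDiff ℝ (⊤ : ℕ∞) Λ) (hΛpos : ∀ z, 0 < Λ z)
    (ha : ∀ i, i ≤ n → ContDiff ℝ (⊤ : ℕ∞) (a i))
    (hKol1 : ∀ z, a (n - 1) z =
      ∑ j ∈ Finset.Icc 1 k, (-1 : ℝ) ^ (j + 1) * a (n - 1 - 2 * j) z)
    (hKol2 : ∀ z, a n z =
      c₂ + ∑ j ∈ Finset.Icc 1 k, (-1 : ℝ) ^ (j + 1) * a (n - 2 * j) z)
    (hHF : ∀ z, poisson
      (fun w => (w.2.1 ^ 2 + w.2.2 ^ 2) / (2 * Λ w.1))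
      (fun w => ∑ i ∈ Finset.range (n + 1), a i w.1 * w.2.1 ^ (n - i) * w.2.2 ^ i) z = 0)
    (P Q R : ℝ × ℝ → ℝ)
    (hP : P = fun w =>
      (∑ j ∈ Finset.Icc 1 k, (-1 : ℝ) ^ (j + 1) * ((n : ℝ) + 1 - 2 * j) * a (2 * j - 1) w) * Λ w)
    (hQ : Q = fun w =>
      (∑ j ∈ Finset.range k, (-1 : ℝ) ^ j * ((n : ℝ) - 1 - 2 * j) * a (2 * j) w) * Λ w)
    (hR : R = fun w =>
      (-(∑ j ∈ Finset.Icc 1 k, (-1 : ℝ) ^ (j + 1) * ((n : ℝ) + 1 - 2 * j) * a (2 * j - 1) w)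
        + (-1 : ℝ) ^ k * (n : ℝ) * c₂) * Λ w) :
    (∀ z, pdx P z + pdy Q z = 0) ∧ (∀ z, pdx Q z + pdy R z = 0) := by
  obtain ⟨K, rfl⟩ : ∃ K, k = K + 1 := ⟨k - 1, by omega⟩
  have main : ∀ x y : ℝ, (pdx P (x, y) + pdy Q (x, y) = 0)
      ∧ (pdx Q (x, y) + pdy R (x, y) = 0) := by
    intro x y
    have hNr : (n : ℝ) = 2 * ((K : ℝ) + 1) + 1 := by rw [hn]; push_cast; ring
    have han : a n = a (2 * (K + 1) + 1) := by rw [hn]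
    have han1 : a (n - 1) = a (2 * (K + 1)) := by rw [show n - 1 = 2 * (K + 1) from by omega]
    -- E instances
    have hEi : ∀ m : ℕ, 1 ≤ m → m ≤ 2 * (K + 1) →
        2 * Λ (x, y) * pdx (a m) (x, y) + 2 * Λ (x, y) * pdy (a (m - 1)) (x, y)
          + pdx Λ (x, y) * (((n : ℝ) - (m : ℝ)) * a m (x, y)
              + ((n : ℝ) - (m : ℝ) + 2) * (if 2 ≤ m then a (m - 2) (x, y) else 0))
          + pdy Λ (x, y) * (((m : ℝ) + 1) * a (m + 1) (x, y)
              + ((m : ℝ) - 1) * a (m - 1) (x, y)) = 0 :=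
      fun m h1 h2 => E_mid n Λ a hΛ hΛpos ha hHF x y m h1 (by omega) (by omega)
    have hE0i := E_zero n Λ a hΛ hΛpos ha hHF x y (by omega)
    have hEtopi := E_top n Λ a hΛ hΛpos ha hHF x y (by omega)
    rw [han, han1] at hEtopi
    -- Kolokoltsov sums
    have hKg : ∑ m ∈ Finset.range (K + 2), (-1 : ℝ) ^ m * a (2 * m) (x, y) = 0 := by
      have h1 : a (2 * (K + 1)) (x, y) = 0 + ∑ j ∈ Finset.Icc 1 (K + 1),
          (-1 : ℝ) ^ (j + 1) * a (2 * ((K + 1) - j)) (x, y) := by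
        rw [zero_add]
        have h0 := hKol1 (x, y)
        rw [han1] at h0
        rw [h0]
        refine Finset.sum_congr rfl fun j hj => ?_
        have hm := Finset.mem_Icc.1 hj
        rw [show n - 1 - 2 * j = 2 * ((K + 1) - j) from by omega]
      have := kol_range (K + 1) 0 (fun m => a (2 * m) (x, y)) h1
      simpa using this
    have hKh : ∑ m ∈ Finset.range (K + 2), (-1 : ℝ) ^ m * a (2 * m + 1) (x, y)
        = (-1 : ℝ) ^ (K + 1) * c₂ := by
      have h1 : a (2 * (K + 1) + 1) (x, y) = c₂ + ∑ j ∈ Finset.Icc 1 (K + 1),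
          (-1 : ℝ) ^ (j + 1) * a (2 * ((K + 1) - j) + 1) (x, y) := by
        rw [← han, hKol2 (x, y)]
        refine congrArg (c₂ + ·) (Finset.sum_congr rfl fun j hj => ?_)
        have hm := Finset.mem_Icc.1 hj
        rw [show n - 2 * j = 2 * ((K + 1) - j) + 1 from by omega]
      exact kol_range (K + 1) c₂ (fun m => a (2 * m + 1) (x, y)) h1
    have hKgx : ∑ m ∈ Finset.range (K + 2), (-1 : ℝ) ^ m * pdx (a (2 * m)) (x, y) = 0 := by
      have hfun : (fun s => a (2 * (K + 1)) (s, y)) = (fun s => ∑ j ∈ Finset.Icc 1 (K + 1),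
          (-1 : ℝ) ^ (j + 1) * a (2 * ((K + 1) - j)) (s, y)) := by
        funext s
        have h0 := hKol1 (s, y)
        rw [han1] at h0
        rw [h0]
        refine Finset.sum_congr rfl fun j hj => ?_
        have hm := Finset.mem_Icc.1 hj
        rw [show n - 1 - 2 * j = 2 * ((K + 1) - j) from by omega]
      have hd : HasDerivAt (fun s => ∑ j ∈ Finset.Icc 1 (K + 1),
          (-1 : ℝ) ^ (j + 1) * a (2 * ((K + 1) - j)) (s, y))
          (∑ j ∈ Finset.Icc 1 (K + 1),
            (-1 : ℝ) ^ (j + 1) * pdx (a (2 * ((K + 1) - j))) (x, y)) x := by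
        refine HasDerivAt.fun_sum fun j hj => ?_
        have hm := Finset.mem_Icc.1 hj
        exact (sliceX_hasDerivAt (ha _ (by omega)) x y).const_mul _
      have h1 : pdx (a (2 * (K + 1))) (x, y) = 0 + ∑ j ∈ Finset.Icc 1 (K + 1),
          (-1 : ℝ) ^ (j + 1) * pdx (a (2 * ((K + 1) - j))) (x, y) := by
        rw [zero_add]
        show deriv (fun s => a (2 * (K + 1)) (s, y)) x = _
        rw [hfun]
        exact hd.deriv
      have := kol_range (K + 1) 0 (fun m => pdx (a (2 * m)) (x, y)) h1
      simpa using this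
    have hKhy : ∑ m ∈ Finset.range (K + 2), (-1 : ℝ) ^ m * pdy (a (2 * m + 1)) (x, y) = 0 := by
      have hfun : (fun s => a (2 * (K + 1) + 1) (x, s)) = (fun s => c₂ + ∑ j ∈ Finset.Icc 1 (K + 1),
          (-1 : ℝ) ^ (j + 1) * a (2 * ((K + 1) - j) + 1) (x, s)) := by
        funext s
        rw [← han, hKol2 (x, s)]
        refine congrArg (c₂ + ·) (Finset.sum_congr rfl fun j hj => ?_)
        have hm := Finset.mem_Icc.1 hj
        rw [show n - 2 * j = 2 * ((K + 1) - j) + 1 from by omega]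
      have hd : HasDerivAt (fun s => c₂ + ∑ j ∈ Finset.Icc 1 (K + 1),
          (-1 : ℝ) ^ (j + 1) * a (2 * ((K + 1) - j) + 1) (x, s))
          (∑ j ∈ Finset.Icc 1 (K + 1),
            (-1 : ℝ) ^ (j + 1) * pdy (a (2 * ((K + 1) - j) + 1)) (x, y)) y := by
        refine HasDerivAt.const_add c₂ (HasDerivAt.fun_sum fun j hj => ?_)
        have hm := Finset.mem_Icc.1 hj
        exact (sliceY_hasDerivAt (ha _ (by omega)) x y).const_mul _
      have h1 : pdy (a (2 * (K + 1) + 1)) (x, y) = 0 + ∑ j ∈ Finset.Icc 1 (K + 1),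
          (-1 : ℝ) ^ (j + 1) * pdy (a (2 * ((K + 1) - j) + 1)) (x, y) := by
        rw [zero_add]
        show deriv (fun s => a (2 * (K + 1) + 1) (x, s)) y = _
        rw [hfun]
        exact hd.deriv
      have := kol_range (K + 1) 0 (fun m => pdy (a (2 * m + 1)) (x, y)) h1
      simpa using this
    -- index conversions Icc → range
    have cA : ∑ j ∈ Finset.Icc 1 (K + 1),
        (-1 : ℝ) ^ (j + 1) * ((n : ℝ) + 1 - 2 * j) * pdx (a (2 * j - 1)) (x, y)
        = ∑ i ∈ Finset.range (K + 1),
          (-1 : ℝ) ^ i * ((n : ℝ) - 1 - 2 * (i : ℝ)) * pdx (a (2 * i + 1)) (x, y) := by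
      rw [sum_Icc_one]
      refine Finset.sum_congr rfl fun i _ => ?_
      rw [show 2 * (i + 1) - 1 = 2 * i + 1 from by omega]
      push_cast
      rw [pow_succ, pow_succ]
      ring
    have cB : ∑ j ∈ Finset.Icc 1 (K + 1),
        (-1 : ℝ) ^ (j + 1) * ((n : ℝ) + 1 - 2 * j) * a (2 * j - 1) (x, y)
        = ∑ i ∈ Finset.range (K + 1),
          (-1 : ℝ) ^ i * ((n : ℝ) - 1 - 2 * (i : ℝ)) * a (2 * i + 1) (x, y) := by
      rw [sum_Icc_one]
      refine Finset.sum_congr rfl fun i _ => ?_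
      rw [show 2 * (i + 1) - 1 = 2 * i + 1 from by omega]
      push_cast
      rw [pow_succ, pow_succ]
      ring
    have cC : ∑ j ∈ Finset.Icc 1 (K + 1),
        (-1 : ℝ) ^ (j + 1) * ((n : ℝ) + 1 - 2 * j) * pdy (a (2 * j - 1)) (x, y)
        = ∑ i ∈ Finset.range (K + 1),
          (-1 : ℝ) ^ i * ((n : ℝ) - 1 - 2 * (i : ℝ)) * pdy (a (2 * i + 1)) (x, y) := by
      rw [sum_Icc_one]
      refine Finset.sum_congr rfl fun i _ => ?_
      rw [show 2 * (i + 1) - 1 = 2 * i + 1 from by omega]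
      push_cast
      rw [pow_succ, pow_succ]
      ring
    constructor
    · -- first conservation law
      have hPd : HasDerivAt (fun s => (∑ j ∈ Finset.Icc 1 (K + 1),
            (-1 : ℝ) ^ (j + 1) * ((n : ℝ) + 1 - 2 * j) * a (2 * j - 1) (s, y)) * Λ (s, y))
          ((∑ j ∈ Finset.Icc 1 (K + 1),
            (-1 : ℝ) ^ (j + 1) * ((n : ℝ) + 1 - 2 * j) * pdx (a (2 * j - 1)) (x, y)) * Λ (x, y)
          + (∑ j ∈ Finset.Icc 1 (K + 1),
            (-1 : ℝ) ^ (j + 1) * ((n : ℝ) + 1 - 2 * j) * a (2 * j - 1) (x, y)) * pdx Λ (x, y))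
          x := by
        refine HasDerivAt.mul (HasDerivAt.fun_sum fun j hj => ?_) (sliceX_hasDerivAt hΛ x y)
        have hm := Finset.mem_Icc.1 hj
        exact (sliceX_hasDerivAt (ha _ (by omega)) x y).const_mul _
      have hQd : HasDerivAt (fun s => (∑ j ∈ Finset.range (K + 1),
            (-1 : ℝ) ^ j * ((n : ℝ) - 1 - 2 * j) * a (2 * j) (x, s)) * Λ (x, s))
          ((∑ j ∈ Finset.range (K + 1),
            (-1 : ℝ) ^ j * ((n : ℝ) - 1 - 2 * j) * pdy (a (2 * j)) (x, y)) * Λ (x, y)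
          + (∑ j ∈ Finset.range (K + 1),
            (-1 : ℝ) ^ j * ((n : ℝ) - 1 - 2 * j) * a (2 * j) (x, y)) * pdy Λ (x, y))
          y := by
        refine HasDerivAt.mul (HasDerivAt.fun_sum fun j hj => ?_) (sliceY_hasDerivAt hΛ x y)
        have hm := Finset.mem_range.1 hj
        exact (sliceY_hasDerivAt (ha _ (by omega)) x y).const_mul _
      have h1 : pdx P (x, y) = (∑ j ∈ Finset.Icc 1 (K + 1),
            (-1 : ℝ) ^ (j + 1) * ((n : ℝ) + 1 - 2 * j) * pdx (a (2 * j - 1)) (x, y)) * Λ (x, y)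
          + (∑ j ∈ Finset.Icc 1 (K + 1),
            (-1 : ℝ) ^ (j + 1) * ((n : ℝ) + 1 - 2 * j) * a (2 * j - 1) (x, y)) * pdx Λ (x, y) := by
        rw [hP]
        exact hPd.deriv
      have h2 : pdy Q (x, y) = (∑ j ∈ Finset.range (K + 1),
            (-1 : ℝ) ^ j * ((n : ℝ) - 1 - 2 * j) * pdy (a (2 * j)) (x, y)) * Λ (x, y)
          + (∑ j ∈ Finset.range (K + 1),
            (-1 : ℝ) ^ j * ((n : ℝ) - 1 - 2 * j) * a (2 * j) (x, y)) * pdy Λ (x, y) := by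
        rw [hQ]
        exact hQd.deriv
      have hsum := odd_comb K (n : ℝ) (Λ (x, y)) (pdx Λ (x, y)) (pdy Λ (x, y))
        (fun i => a i (x, y)) (fun i => pdx (a i) (x, y)) (fun i => pdy (a i) (x, y))
        hNr hEi hKg
      have hexp1 : (∑ i ∈ Finset.range (K + 1),
            (-1 : ℝ) ^ i * ((n : ℝ) - 1 - 2 * (i : ℝ)) * pdx (a (2 * i + 1)) (x, y)) * Λ (x, y)
          + (∑ i ∈ Finset.range (K + 1),
            (-1 : ℝ) ^ i * ((n : ℝ) - 1 - 2 * (i : ℝ)) * a (2 * i + 1) (x, y)) * pdx Λ (x, y)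
          + (∑ j ∈ Finset.range (K + 1),
            (-1 : ℝ) ^ j * ((n : ℝ) - 1 - 2 * j) * pdy (a (2 * j)) (x, y)) * Λ (x, y)
          + (∑ j ∈ Finset.range (K + 1),
            (-1 : ℝ) ^ j * ((n : ℝ) - 1 - 2 * j) * a (2 * j) (x, y)) * pdy Λ (x, y)
          = ∑ j ∈ Finset.range (K + 1), (-1 : ℝ) ^ j * ((n : ℝ) - 1 - 2 * (j : ℝ)) *
            (pdx (a (2 * j + 1)) (x, y) * Λ (x, y) + a (2 * j + 1) (x, y) * pdx Λ (x, y)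
              + pdy (a (2 * j)) (x, y) * Λ (x, y) + a (2 * j) (x, y) * pdy Λ (x, y)) := by
        rw [Finset.sum_mul, Finset.sum_mul, Finset.sum_mul, Finset.sum_mul,
          ← Finset.sum_add_distrib, ← Finset.sum_add_distrib, ← Finset.sum_add_distrib]
        refine Finset.sum_congr rfl fun j _ => ?_
        ring
      rw [h1, h2, cA, cB]
      linear_combination hsum + hexp1
    · -- second conservation law
      have hQd : HasDerivAt (fun s => (∑ j ∈ Finset.range (K + 1),
            (-1 : ℝ) ^ j * ((n : ℝ) - 1 - 2 * j) * a (2 * j) (s, y)) * Λ (s, y))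
          ((∑ j ∈ Finset.range (K + 1),
            (-1 : ℝ) ^ j * ((n : ℝ) - 1 - 2 * j) * pdx (a (2 * j)) (x, y)) * Λ (x, y)
          + (∑ j ∈ Finset.range (K + 1),
            (-1 : ℝ) ^ j * ((n : ℝ) - 1 - 2 * j) * a (2 * j) (x, y)) * pdx Λ (x, y))
          x := by
        refine HasDerivAt.mul (HasDerivAt.fun_sum fun j hj => ?_) (sliceX_hasDerivAt hΛ x y)
        have hm := Finset.mem_range.1 hj
        exact (sliceX_hasDerivAt (ha _ (by omega)) x y).const_mul _
      have hRd : HasDerivAt (fun s => (-(∑ j ∈ Finset.Icc 1 (K + 1),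
            (-1 : ℝ) ^ (j + 1) * ((n : ℝ) + 1 - 2 * j) * a (2 * j - 1) (x, s))
            + (-1 : ℝ) ^ (K + 1) * (n : ℝ) * c₂) * Λ (x, s))
          ((-(∑ j ∈ Finset.Icc 1 (K + 1),
            (-1 : ℝ) ^ (j + 1) * ((n : ℝ) + 1 - 2 * j) * pdy (a (2 * j - 1)) (x, y))) * Λ (x, y)
          + (-(∑ j ∈ Finset.Icc 1 (K + 1),
            (-1 : ℝ) ^ (j + 1) * ((n : ℝ) + 1 - 2 * j) * a (2 * j - 1) (x, y))
            + (-1 : ℝ) ^ (K + 1) * (n : ℝ) * c₂) * pdy Λ (x, y))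
          y := by
        refine HasDerivAt.mul (HasDerivAt.add_const _ (HasDerivAt.neg
          (HasDerivAt.fun_sum fun j hj => ?_))) (sliceY_hasDerivAt hΛ x y)
        have hm := Finset.mem_Icc.1 hj
        exact (sliceY_hasDerivAt (ha _ (by omega)) x y).const_mul _
      have h1 : pdx Q (x, y) = (∑ j ∈ Finset.range (K + 1),
            (-1 : ℝ) ^ j * ((n : ℝ) - 1 - 2 * j) * pdx (a (2 * j)) (x, y)) * Λ (x, y)
          + (∑ j ∈ Finset.range (K + 1),
            (-1 : ℝ) ^ j * ((n : ℝ) - 1 - 2 * j) * a (2 * j) (x, y)) * pdx Λ (x, y) := by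
        rw [hQ]
        exact hQd.deriv
      have h2 : pdy R (x, y) = (-(∑ j ∈ Finset.Icc 1 (K + 1),
            (-1 : ℝ) ^ (j + 1) * ((n : ℝ) + 1 - 2 * j) * pdy (a (2 * j - 1)) (x, y))) * Λ (x, y)
          + (-(∑ j ∈ Finset.Icc 1 (K + 1),
            (-1 : ℝ) ^ (j + 1) * ((n : ℝ) + 1 - 2 * j) * a (2 * j - 1) (x, y))
            + (-1 : ℝ) ^ (K + 1) * (n : ℝ) * c₂) * pdy Λ (x, y) := by
        rw [hR]
        exact hRd.deriv
      have hsum2 := even_comb K (n : ℝ) (Λ (x, y)) (pdx Λ (x, y)) (pdy Λ (x, y)) c₂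
        (fun i => a i (x, y)) (fun i => pdx (a i) (x, y)) (fun i => pdy (a i) (x, y))
        hNr hEi hE0i hEtopi hKg hKh hKgx hKhy
      have hexp2 : (∑ j ∈ Finset.range (K + 1),
            (-1 : ℝ) ^ j * ((n : ℝ) - 1 - 2 * j) * pdx (a (2 * j)) (x, y)) * Λ (x, y)
          + (∑ j ∈ Finset.range (K + 1),
            (-1 : ℝ) ^ j * ((n : ℝ) - 1 - 2 * j) * a (2 * j) (x, y)) * pdx Λ (x, y)
          - (∑ i ∈ Finset.range (K + 1),
            (-1 : ℝ) ^ i * ((n : ℝ) - 1 - 2 * (i : ℝ)) * pdy (a (2 * i + 1)) (x, y)) * Λ (x, y)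
          - (∑ i ∈ Finset.range (K + 1),
            (-1 : ℝ) ^ i * ((n : ℝ) - 1 - 2 * (i : ℝ)) * a (2 * i + 1) (x, y)) * pdy Λ (x, y)
          = ∑ j ∈ Finset.range (K + 1),
            ((-1 : ℝ) ^ j * ((n : ℝ) - 1 - 2 * (j : ℝ)) *
                (pdx (a (2 * j)) (x, y) * Λ (x, y) + a (2 * j) (x, y) * pdx Λ (x, y))
              - (-1 : ℝ) ^ j * ((n : ℝ) - 1 - 2 * (j : ℝ)) *
                (pdy (a (2 * j + 1)) (x, y) * Λ (x, y) + a (2 * j + 1) (x, y) * pdy Λ (x, y))) := by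
        rw [Finset.sum_mul, Finset.sum_mul, Finset.sum_mul, Finset.sum_mul,
          ← Finset.sum_add_distrib, ← Finset.sum_sub_distrib, ← Finset.sum_sub_distrib]
        refine Finset.sum_congr rfl fun j _ => ?_
        ring
      rw [h1, h2, cB, cC]
      linear_combination hsum2 + hexp2
  refine ⟨fun z => ?_, fun z => ?_⟩
  · obtain ⟨x, y⟩ := z
    exact (main x y).1
  · obtain ⟨x, y⟩ := z
    exact (main x y).2
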